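/- arXiv:2309.04193 — 6 statements merged into one kernel-verified Lean document; each statement's English description precedes it below -/
import Mathlib

section
/- Let v₁, v₂ ∈ ℝⁿ and D = conv{v₁, v₂}. Then the union over all x ∈ D of the hyperplanes H_x = {y : y·x = 0} equals (H_{v₁}⁻ ∩ H_{v₂}⁺) ∪ (H_{v₁}⁺ ∩ H_{v₂}⁻). -/
/-!
An affine functional maps the segment `[v₁, v₂]` onto the interval between its values at the
endpoints, so it vanishes somewhere on the segment exactly when those two values have weakly
opposite signs. Apply this to `x ↦ y ⬝ᵥ x` for each `y`.
-/

open Matrix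

theorem AffineMap.exists_mem_segment_eq_zero_iff {𝕜 E : Type*} [Field 𝕜] [LinearOrder 𝕜]
    [IsStrictOrderedRing 𝕜] [AddCommGroup E] [Module 𝕜 E] (f : E →ᵃ[𝕜] 𝕜) (a b : E) :
    (∃ x ∈ segment 𝕜 a b, f x = 0) ↔ f a ≤ 0 ∧ 0 ≤ f b ∨ 0 ≤ f a ∧ f b ≤ 0 := by
  rw [and_comm (a := 0 ≤ f a), ← Set.mem_uIcc, ← segment_eq_uIcc, ← image_segment, Set.mem_image]

theorem stmt_1 (n : ℕ) (v₁ v₂ : Fin n → ℝ) :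
    (⋃ x ∈ segment ℝ v₁ v₂, {y : Fin n → ℝ | y ⬝ᵥ x = 0}) =
      ({y : Fin n → ℝ | y ⬝ᵥ v₁ ≤ 0} ∩ {y : Fin n → ℝ | 0 ≤ y ⬝ᵥ v₂}) ∪
      ({y : Fin n → ℝ | 0 ≤ y ⬝ᵥ v₁} ∩ {y : Fin n → ℝ | y ⬝ᵥ v₂ ≤ 0}) := by
  ext y
  have h := (dotProductBilin ℝ ℝ y).toAffineMap.exists_mem_segment_eq_zero_iff v₁ v₂
  simp only [LinearMap.coe_toAffineMap, dotProductBilin_apply_apply] at h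
  simpa only [Set.mem_iUnion, Set.mem_ofPred_eq, Set.mem_union, Set.mem_inter_iff, exists_prop]
end

section
/- Let μ, μ' ∈ Δ(Θ) be beliefs over a finite state space, and A(·) the argmax correspondence of a receiver utility u_R. If A(μ) ∩ A(μ') ≠ ∅, then for every μ̃ in the segment conv{μ, μ'} with μ̃ ∉ {μ, μ'}, one has A(μ̃) = A(μ) ∩ A(μ'). -/
/-!
Expected utility is linear in the belief, so at an interior point `s • μ + t • μ'` of the segment
(`s, t > 0`) the receiver maximizes `s • U_μ + t • U_μ'`. Positive scaling does not move maximizers,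
and once `U_μ` and `U_μ'` have a common maximizer `c`, an action maximizing the sum must reach the
value of `c` in each summand, hence maximize both.
-/

section Maximizers

variable {A β : Type*}

def maximizers [LE β] (f : A → β) : Set A := {a | ∀ b, f b ≤ f a}

theorem maximizers_smul {𝕜 : Type*} [Zero 𝕜] [Preorder 𝕜] [Preorder β] [SMul 𝕜 β]
    [PosSMulMono 𝕜 β] [PosSMulReflectLE 𝕜 β] {s : 𝕜} (hs : 0 < s) (f : A → β) :
    maximizers (s • f) = maximizers f := by
  ext a
  simp only [maximizers, Set.mem_ofPred_eq, Pi.smul_apply, smul_le_smul_iff_of_pos_left hs]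

theorem maximizers_add_of_nonempty [AddCommMonoid β] [PartialOrder β]
    [IsOrderedCancelAddMonoid β] {f g : A → β} (h : (maximizers f ∩ maximizers g).Nonempty) :
    maximizers (f + g) = maximizers f ∩ maximizers g := by
  obtain ⟨c, hcf, hcg⟩ := h
  ext a
  simp only [maximizers, Set.mem_ofPred_eq, Set.mem_inter_iff, Pi.add_apply]
  constructor
  · intro ha
    have hfa : f c ≤ f a := le_of_add_le_add_right ((add_le_add_right (hcg a) _).trans (ha c))
    have hga : g c ≤ g a := le_of_add_le_add_left ((add_le_add_left (hcf a) _).trans (ha c))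
    exact ⟨fun b => (hcf b).trans hfa, fun b => (hcg b).trans hga⟩
  · rintro ⟨hf, hg⟩ b
    exact add_le_add (hf b) (hg b)

end Maximizers

theorem stmt_7_general (A Θ : Type*) [Fintype Θ]
    (uR : A → Θ → ℝ) (μ μ' : Θ → ℝ)
    (hcap : ({a : A | ∀ b : A, ∑ θ, uR b θ * μ θ ≤ ∑ θ, uR a θ * μ θ} ∩
             {a : A | ∀ b : A, ∑ θ, uR b θ * μ' θ ≤ ∑ θ, uR a θ * μ' θ}).Nonempty) :
    ∀ ν ∈ segment ℝ μ μ', ν ≠ μ → ν ≠ μ' →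
      {a : A | ∀ b : A, ∑ θ, uR b θ * ν θ ≤ ∑ θ, uR a θ * ν θ} =
      {a : A | ∀ b : A, ∑ θ, uR b θ * μ θ ≤ ∑ θ, uR a θ * μ θ} ∩
      {a : A | ∀ b : A, ∑ θ, uR b θ * μ' θ ≤ ∑ θ, uR a θ * μ' θ} := by
  intro ν hν hνμ hνμ'
  obtain ⟨s, t, hs, ht, -, rfl⟩ := mem_openSegment_of_ne_left_right hνμ.symm hνμ'.symm hν
  change maximizers (fun b => uR b ⬝ᵥ (s • μ + t • μ')) =
    maximizers (fun b => uR b ⬝ᵥ μ) ∩ maximizers (fun b => uR b ⬝ᵥ μ')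
  have hlin : (fun b => uR b ⬝ᵥ (s • μ + t • μ')) =
      s • (fun b => uR b ⬝ᵥ μ) + t • (fun b => uR b ⬝ᵥ μ') := by
    ext b
    simp only [dotProduct_add, dotProduct_smul, Pi.add_apply, Pi.smul_apply]
  rw [hlin, maximizers_add_of_nonempty, maximizers_smul hs, maximizers_smul ht]
  rwa [maximizers_smul hs, maximizers_smul ht]

theorem stmt_7 (A Θ : Type*) [Fintype A] [Fintype Θ]
    (uR : A → Θ → ℝ) (μ μ' : Θ → ℝ)
    (hμ : μ ∈ stdSimplex ℝ Θ) (hμ' : μ' ∈ stdSimplex ℝ Θ)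
    (hcap : ({a : A | ∀ b : A, ∑ θ, uR b θ * μ θ ≤ ∑ θ, uR a θ * μ θ} ∩
             {a : A | ∀ b : A, ∑ θ, uR b θ * μ' θ ≤ ∑ θ, uR a θ * μ' θ}).Nonempty) :
    ∀ ν ∈ segment ℝ μ μ', ν ≠ μ → ν ≠ μ' →
      {a : A | ∀ b : A, ∑ θ, uR b θ * ν θ ≤ ∑ θ, uR a θ * ν θ} =
      {a : A | ∀ b : A, ∑ θ, uR b θ * μ θ ≤ ∑ θ, uR a θ * μ θ} ∩
      {a : A | ∀ b : A, ∑ θ, uR b θ * μ' θ ≤ ∑ θ, uR a θ * μ' θ} :=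
  stmt_7_general A Θ uR μ μ' hcap
end

section
/- Let A(μ), A(μ') ⊆ A with A finite, and let D = {r − r' : r, r' ∈ Δ(A), supp(r) ⊆ A(μ), supp(r') ⊆ A(μ')} ⊆ ℝⁿ (n = |A|). For x ∈ D, a pair (r, r') ∈ Δ(A)² with supp(r) ⊆ A(μ), supp(r') ⊆ A(μ') satisfies r − r' = x if and only if (r, r') = (x⁺ + d, x⁻ + d) for some d ∈ ℝ₊ⁿ with 𝟙·d = 1 − 𝟙·x⁺ and d_i = 0 whenever a_i ∉ A(μ) ∩ A(μ'). -/
/-!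
Coordinatewise, two reals split as `a = max (a - b) 0 + min a b` and
`b = max (b - a) 0 + min a b`. Hence `r = x⁺ + d` and `r' = x⁻ + d` with `d = min r r'`, which
vanishes off `S ∩ T` because `r, r' ≥ 0` vanish off `S` and `T` respectively; the sum condition
on `d` is the sum of `r = x⁺ + d`. Conversely `x⁺ - x⁻ = x`.
-/

section LinearOrderedAddCommGroup

variable {G : Type*} [AddCommGroup G] [LinearOrder G] [IsOrderedAddMonoid G]

theorem max_sub_zero_add_min (a b : G) : max (a - b) 0 + min a b = a := by
  rw [← sub_self b, max_sub_sub_right, sub_add_eq_add_sub, add_comm, min_add_max,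
    add_sub_cancel_right]

theorem max_neg_sub_zero_add_min (a b : G) : max (-(a - b)) 0 + min a b = b := by
  rw [neg_sub, min_comm, max_sub_zero_add_min]

end LinearOrderedAddCommGroup

theorem stmt_9_general (α : Type*) [Fintype α] [DecidableEq α] (S T : Finset α)
    (x : α → ℝ)
    (r r' : α → ℝ)
    (hr : (∀ a, 0 ≤ r a) ∧ (∑ a, r a) = 1 ∧ (∀ a, r a ≠ 0 → a ∈ S))
    (hr' : (∀ a, 0 ≤ r' a) ∧ (∑ a, r' a) = 1 ∧ (∀ a, r' a ≠ 0 → a ∈ T)) :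
    r - r' = x ↔
      ∃ d : α → ℝ, (∀ a, 0 ≤ d a) ∧
        (∑ a, d a) = 1 - (∑ a, max (x a) 0) ∧
        (∀ a, a ∉ S ∩ T → d a = 0) ∧
        r = (fun a => max (x a) 0) + d ∧ r' = (fun a => max (-x a) 0) + d := by
  obtain ⟨hr0, hr1, hrS⟩ := hr
  obtain ⟨hr'0, -, hr'T⟩ := hr'
  constructor
  · rintro rfl
    have hr_eq : r = (fun a => max ((r - r') a) 0) + fun a => min (r a) (r' a) :=
      funext fun a => (max_sub_zero_add_min (r a) (r' a)).symm
    refine ⟨fun a => min (r a) (r' a), fun a => le_min (hr0 a) (hr'0 a), ?_, ?_, hr_eq,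
      funext fun a => (max_neg_sub_zero_add_min (r a) (r' a)).symm⟩
    · have hsum := congrArg (fun f => ∑ a, f a) hr_eq
      simp only [Pi.add_apply, Finset.sum_add_distrib, hr1] at hsum
      linarith
    · intro a ha
      dsimp only
      rcases not_and_or.mp (Finset.mem_inter.not.mp ha) with haS | haT
      · rw [not_ne_iff.mp (mt (hrS a) haS), min_eq_left (hr'0 a)]
      · rw [not_ne_iff.mp (mt (hr'T a) haT), min_eq_right (hr0 a)]
  · rintro ⟨d, -, -, -, rfl, rfl⟩
    funext a
    simp only [Pi.sub_apply, Pi.add_apply, add_sub_add_right_eq_sub,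
      max_zero_sub_max_neg_zero_eq_self]

theorem stmt_9 (α : Type*) [Fintype α] [DecidableEq α] (S T : Finset α)
    (x : α → ℝ)
    (hx : ∃ r r' : α → ℝ,
        (∀ a, 0 ≤ r a) ∧ (∑ a, r a) = 1 ∧ (∀ a, r a ≠ 0 → a ∈ S) ∧
        (∀ a, 0 ≤ r' a) ∧ (∑ a, r' a) = 1 ∧ (∀ a, r' a ≠ 0 → a ∈ T) ∧
        x = r - r')
    (r r' : α → ℝ)
    (hr : (∀ a, 0 ≤ r a) ∧ (∑ a, r a) = 1 ∧ (∀ a, r a ≠ 0 → a ∈ S))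
    (hr' : (∀ a, 0 ≤ r' a) ∧ (∑ a, r' a) = 1 ∧ (∀ a, r' a ≠ 0 → a ∈ T)) :
    r - r' = x ↔
      ∃ d : α → ℝ, (∀ a, 0 ≤ d a) ∧
        (∑ a, d a) = 1 - (∑ a, max (x a) 0) ∧
        (∀ a, a ∉ S ∩ T → d a = 0) ∧
        r = (fun a => max (x a) 0) + d ∧ r' = (fun a => max (-x a) 0) + d :=
  stmt_9_general α S T x r r' hr hr'
end

section
/- With D and the sets A(μ), A(μ') as in the decomposition lemma: if x₀ = r₀ − r₀' ∈ D with (r₀, r₀') a valid pair (supports contained in A(μ) and A(μ') respectively), then for any neighborhood R of (r₀, r₀') there is a neighborhood X of x₀ such that every x ∈ X ∩ D has a representation x = r − r' with (r, r') ∈ R, supp(r) ⊆ A(μ), supp(r') ⊆ A(μ'). (Local continuity of a selection of the inverse of the difference map.) -/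
/-!
Any `x = r - r'` with `r, r' ≥ 0` splits as `r = x⁺ + m`, `r' = x⁻ + m` with `m = r ⊓ r'`, whose
total mass `1 - ∑ a, x⁺ a` depends continuously on `x` alone. If this mass is positive at
`x₀ = r₀ - r₀'`, rescaling `r₀ ⊓ r₀'` (supported in `S ∩ T`) to the mass at `x` gives a continuous
selection `x ↦ (x⁺ + m, x⁻ + m)` through `(r₀, r₀')`. If it vanishes, every representation of `x`
lies within that mass of `(x⁺, x⁻)`, which tends to `(r₀, r₀')`.
-/

open Finset Function Filter Topology

section

variable {α : Type*}

lemma continuous_posPart_pi : Continuous fun x : α → ℝ => x⁺ :=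
  continuous_pi fun a => continuous_posPart.comp (continuous_apply a)

lemma continuous_negPart_pi : Continuous fun x : α → ℝ => x⁻ :=
  continuous_pi fun a => continuous_negPart.comp (continuous_apply a)

lemma posPart_sub_add_inf (r r' : α → ℝ) : (r - r')⁺ + r ⊓ r' = r := by
  rw [inf_eq_sub_posPart_sub, add_sub_cancel]

lemma negPart_sub_add_inf (r r' : α → ℝ) : (r - r')⁻ + r ⊓ r' = r' := by
  rw [← posPart_neg, neg_sub, inf_comm, inf_eq_sub_posPart_sub, add_sub_cancel]

lemma support_inf_subset_left {r r' : α → ℝ} (hr' : 0 ≤ r') : support (r ⊓ r') ⊆ support r :=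
  support_subset_iff'.2 fun a ha => by
    rw [Pi.inf_apply, notMem_support.1 ha]
    exact inf_eq_left.2 (hr' a)

lemma support_inf_subset_right {r r' : α → ℝ} (hr : 0 ≤ r) : support (r ⊓ r') ⊆ support r' :=
  inf_comm r r' ▸ support_inf_subset_left hr

lemma support_posPart_sub_subset {r r' : α → ℝ} (hr' : 0 ≤ r') :
    support (r - r')⁺ ⊆ support r :=
  support_subset_iff'.2 fun a ha => by
    rw [Pi.posPart_apply, Pi.sub_apply, notMem_support.1 ha, zero_sub, posPart_eq_zero]
    exact neg_nonpos.2 (hr' a)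

variable [Fintype α]

def IsDistributionOn (S : Finset α) (r : α → ℝ) : Prop :=
  0 ≤ r ∧ ∑ a, r a = 1 ∧ support r ⊆ S

def overlap (x : α → ℝ) : ℝ := 1 - ∑ a, x⁺ a

lemma continuous_overlap : Continuous (overlap : (α → ℝ) → ℝ) :=
  continuous_const.sub <| continuous_finsetSum _ fun a _ =>
    (continuous_apply a).comp continuous_posPart_pi

lemma sum_inf_eq_overlap {r r' : α → ℝ} (hr : ∑ a, r a = 1) :
    ∑ a, (r ⊓ r') a = overlap (r - r') := by
  simp only [inf_eq_sub_posPart_sub, Pi.sub_apply, sum_sub_distrib, hr, overlap]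

lemma overlap_nonneg {r r' : α → ℝ} (hr : ∑ a, r a = 1) (h : 0 ≤ r ⊓ r') :
    0 ≤ overlap (r - r') :=
  sum_inf_eq_overlap hr ▸ sum_nonneg fun a _ => h a

lemma overlap_sub_comm {r r' : α → ℝ} (hr : ∑ a, r a = 1) (hr' : ∑ a, r' a = 1) :
    overlap (r' - r) = overlap (r - r') := by
  rw [← sum_inf_eq_overlap hr', ← sum_inf_eq_overlap hr, inf_comm]

lemma dist_le_overlap {r r' : α → ℝ} (hr : 0 ≤ r) (hr_sum : ∑ a, r a = 1) (hr' : 0 ≤ r') :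
    dist (r, r') ((r - r')⁺, (r - r')⁻) ≤ overlap (r - r') := by
  have hinf : 0 ≤ r ⊓ r' := le_inf hr hr'
  have h₁ : r - (r - r')⁺ = r ⊓ r' := (inf_eq_sub_posPart_sub r r').symm
  have h₂ : r' - (r - r')⁻ = r ⊓ r' := (eq_sub_of_add_eq' (negPart_sub_add_inf r r')).symm
  rw [Prod.dist_eq, dist_eq_norm, dist_eq_norm, h₁, h₂, max_self,
    pi_norm_le_iff_of_nonneg (overlap_nonneg hr_sum hinf)]
  intro a
  rw [Real.norm_of_nonneg (hinf a), ← sum_inf_eq_overlap hr_sum]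
  exact single_le_sum (fun b _ => hinf b) (mem_univ a)

lemma isDistributionOn_posPart_sub_add {S : Finset α} {r r' m : α → ℝ} (hr : support r ⊆ S)
    (hr' : 0 ≤ r') (hm : 0 ≤ m) (hm_sum : ∑ a, m a = overlap (r - r')) (hmS : support m ⊆ S) :
    IsDistributionOn S ((r - r')⁺ + m) :=
  ⟨add_nonneg (posPart_nonneg _) hm,
    by simp only [Pi.add_apply, sum_add_distrib, hm_sum, overlap, add_sub_cancel],
    (support_add _ _).trans (Set.union_subset ((support_posPart_sub_subset hr').trans hr) hmS)⟩

lemma isDistributionOn_negPart_sub_add {T : Finset α} {r r' m : α → ℝ} (hr : 0 ≤ r)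
    (hr_sum : ∑ a, r a = 1) (hr'_sum : ∑ a, r' a = 1) (hr' : support r' ⊆ T) (hm : 0 ≤ m)
    (hm_sum : ∑ a, m a = overlap (r - r')) (hmT : support m ⊆ T) :
    IsDistributionOn T ((r - r')⁻ + m) := by
  rw [← posPart_neg, neg_sub]
  exact isDistributionOn_posPart_sub_add hr' hr hm
    (hm_sum.trans (overlap_sub_comm hr_sum hr'_sum).symm) hmT

variable {S T : Finset α} {r₀ r₀' : α → ℝ} {R : Set ((α → ℝ) × (α → ℝ))}

lemma eventually_mem_of_overlap_eq_zero (h₀ : 0 ≤ r₀) (h₀_sum : ∑ a, r₀ a = 1) (h₀' : 0 ≤ r₀')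
    (hzero : overlap (r₀ - r₀') = 0) (hR : R ∈ 𝓝 (r₀, r₀')) :
    ∀ᶠ x in 𝓝 (r₀ - r₀'), ∀ r r' : α → ℝ,
      0 ≤ r → ∑ a, r a = 1 → 0 ≤ r' → r - r' = x → (r, r') ∈ R := by
  obtain ⟨ε, hε, hball⟩ := Metric.mem_nhds_iff.1 hR
  have hparts : ((r₀ - r₀')⁺, (r₀ - r₀')⁻) = (r₀, r₀') :=
    (dist_le_zero.1 (hzero ▸ dist_le_overlap h₀ h₀_sum h₀')).symm
  have hparts_near : ∀ᶠ x in 𝓝 (r₀ - r₀'), dist (x⁺, x⁻) (r₀, r₀') < ε / 2 :=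
    ((continuous_posPart_pi.prodMk continuous_negPart_pi).tendsto' _ _ hparts).eventually
      (Metric.ball_mem_nhds _ (half_pos hε))
  have hoverlap_small : ∀ᶠ x in 𝓝 (r₀ - r₀'), overlap x < ε / 2 :=
    (continuous_overlap.tendsto' _ _ hzero).eventually (gt_mem_nhds (half_pos hε))
  filter_upwards [hparts_near, hoverlap_small] with x hx hx_small
  rintro r r' hr hr_sum hr' rfl
  apply hball
  calc dist (r, r') (r₀, r₀')
      ≤ dist (r, r') ((r - r')⁺, (r - r')⁻) + dist ((r - r')⁺, (r - r')⁻) (r₀, r₀') :=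
        dist_triangle _ _ _
    _ < ε / 2 + ε / 2 := add_lt_add ((dist_le_overlap hr hr_sum hr').trans_lt hx_small) hx
    _ = ε := add_halves ε

lemma eventually_exists_of_overlap_pos (h₀ : IsDistributionOn S r₀)
    (h₀' : IsDistributionOn T r₀') (hpos : 0 < overlap (r₀ - r₀')) (hR : R ∈ 𝓝 (r₀, r₀')) :
    ∀ᶠ x in 𝓝 (r₀ - r₀'), ∀ r₁ r₂ : α → ℝ,
      IsDistributionOn S r₁ → IsDistributionOn T r₂ → r₁ - r₂ = x →
        ∃ r r', (r, r') ∈ R ∧ IsDistributionOn S r ∧ IsDistributionOn T r' ∧ r - r' = x := by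
  set m : (α → ℝ) → α → ℝ := fun x => (overlap x / overlap (r₀ - r₀')) • (r₀ ⊓ r₀') with hm_def
  have hm₀ : m (r₀ - r₀') = r₀ ⊓ r₀' := by simp only [hm_def, div_self hpos.ne', one_smul]
  have hm_cont : Continuous m := (continuous_overlap.div_const _).smul continuous_const
  have hsel : ∀ᶠ x in 𝓝 (r₀ - r₀'), (x⁺ + m x, x⁻ + m x) ∈ R := by
    refine ((continuous_posPart_pi.add hm_cont).prodMk
      (continuous_negPart_pi.add hm_cont)).continuousAt.preimage_mem_nhds ?_
    simpa only [Pi.add_apply, hm₀, posPart_sub_add_inf, negPart_sub_add_inf] using hR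
  filter_upwards [hsel] with x hx
  rintro r₁ r₂ ⟨h₁, h₁_sum, h₁S⟩ ⟨h₂, h₂_sum, h₂T⟩ rfl
  have hm : 0 ≤ m (r₁ - r₂) :=
    smul_nonneg (div_nonneg (overlap_nonneg h₁_sum (le_inf h₁ h₂)) hpos.le) (le_inf h₀.1 h₀'.1)
  have hm_sum : ∑ a, m (r₁ - r₂) a = overlap (r₁ - r₂) := by
    simp only [hm_def, Pi.smul_apply, smul_eq_mul, ← mul_sum, sum_inf_eq_overlap h₀.2.1,
      div_mul_cancel₀ _ hpos.ne']
  have hm_supp : support (m (r₁ - r₂)) ⊆ support (r₀ ⊓ r₀') := support_const_smul_subset _ _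
  refine ⟨_, _, hx,
    isDistributionOn_posPart_sub_add h₁S h₂ hm hm_sum
      (hm_supp.trans ((support_inf_subset_left h₀'.1).trans h₀.2.2)),
    isDistributionOn_negPart_sub_add h₁ h₁_sum h₂_sum h₂T hm hm_sum
      (hm_supp.trans ((support_inf_subset_right h₀.1).trans h₀'.2.2)), ?_⟩
  rw [add_sub_add_right_eq_sub, posPart_sub_negPart]

theorem eventually_exists_sub_eq (h₀ : IsDistributionOn S r₀) (h₀' : IsDistributionOn T r₀')
    (hR : R ∈ 𝓝 (r₀, r₀')) :
    ∀ᶠ x in 𝓝 (r₀ - r₀'), ∀ r₁ r₂ : α → ℝ,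
      IsDistributionOn S r₁ → IsDistributionOn T r₂ → r₁ - r₂ = x →
        ∃ r r', (r, r') ∈ R ∧ IsDistributionOn S r ∧ IsDistributionOn T r' ∧ r - r' = x := by
  rcases (overlap_nonneg h₀.2.1 (le_inf h₀.1 h₀'.1)).eq_or_lt with hzero | hpos
  · filter_upwards [eventually_mem_of_overlap_eq_zero h₀.1 h₀.2.1 h₀'.1 hzero.symm hR] with x hx
    rintro r₁ r₂ h₁ h₂ rfl
    exact ⟨r₁, r₂, hx r₁ r₂ h₁.1 h₁.2.1 h₂.1 rfl, h₁, h₂, rfl⟩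
  · exact eventually_exists_of_overlap_pos h₀ h₀' hpos hR

end

theorem stmt_10_general (α : Type*) [Fintype α] (S T : Finset α)
    (r₀ r₀' : α → ℝ)
    (hr₀ : (∀ a, 0 ≤ r₀ a) ∧ (∑ a, r₀ a) = 1 ∧ (∀ a, r₀ a ≠ 0 → a ∈ S))
    (hr₀' : (∀ a, 0 ≤ r₀' a) ∧ (∑ a, r₀' a) = 1 ∧ (∀ a, r₀' a ≠ 0 → a ∈ T)) :
    ∀ R ∈ nhds (r₀, r₀'), ∃ X ∈ nhds (r₀ - r₀'),
      ∀ x ∈ X ∩ {x : α → ℝ | ∃ r r' : α → ℝ,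
          (∀ a, 0 ≤ r a) ∧ (∑ a, r a) = 1 ∧ (∀ a, r a ≠ 0 → a ∈ S) ∧
          (∀ a, 0 ≤ r' a) ∧ (∑ a, r' a) = 1 ∧ (∀ a, r' a ≠ 0 → a ∈ T) ∧
          x = r - r'},
        ∃ r r' : α → ℝ, (r, r') ∈ R ∧
          (∀ a, 0 ≤ r a) ∧ (∑ a, r a) = 1 ∧ (∀ a, r a ≠ 0 → a ∈ S) ∧
          (∀ a, 0 ≤ r' a) ∧ (∑ a, r' a) = 1 ∧ (∀ a, r' a ≠ 0 → a ∈ T) ∧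
          x = r - r' := by
  intro R hR
  obtain ⟨X, hX, hXR⟩ := (eventually_exists_sub_eq hr₀ hr₀' hR).exists_mem
  refine ⟨X, hX, ?_⟩
  rintro x ⟨hx, r₁, r₂, h₁, h₁_sum, h₁S, h₂, h₂_sum, h₂T, rfl⟩
  obtain ⟨r, r', hrR, ⟨hr, hr_sum, hrS⟩, ⟨hr', hr'_sum, hr'T⟩, hsub⟩ :=
    hXR _ hx r₁ r₂ ⟨h₁, h₁_sum, h₁S⟩ ⟨h₂, h₂_sum, h₂T⟩ rfl
  exact ⟨r, r', hrR, hr, hr_sum, hrS, hr', hr'_sum, hr'T, hsub.symm⟩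

theorem stmt_10 (α : Type*) [Fintype α] [DecidableEq α] (S T : Finset α)
    (r₀ r₀' : α → ℝ)
    (hr₀ : (∀ a, 0 ≤ r₀ a) ∧ (∑ a, r₀ a) = 1 ∧ (∀ a, r₀ a ≠ 0 → a ∈ S))
    (hr₀' : (∀ a, 0 ≤ r₀' a) ∧ (∑ a, r₀' a) = 1 ∧ (∀ a, r₀' a ≠ 0 → a ∈ T)) :
    ∀ R ∈ nhds (r₀, r₀'), ∃ X ∈ nhds (r₀ - r₀'),
      ∀ x ∈ X ∩ {x : α → ℝ | ∃ r r' : α → ℝ,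
          (∀ a, 0 ≤ r a) ∧ (∑ a, r a) = 1 ∧ (∀ a, r a ≠ 0 → a ∈ S) ∧
          (∀ a, 0 ≤ r' a) ∧ (∑ a, r' a) = 1 ∧ (∀ a, r' a ≠ 0 → a ∈ T) ∧
          x = r - r'},
        ∃ r r' : α → ℝ, (r, r') ∈ R ∧
          (∀ a, 0 ≤ r a) ∧ (∑ a, r a) = 1 ∧ (∀ a, r a ≠ 0 → a ∈ S) ∧
          (∀ a, 0 ≤ r' a) ∧ (∑ a, r' a) = 1 ∧ (∀ a, r' a ≠ 0 → a ∈ T) ∧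
          x = r - r' :=
  stmt_10_general α S T r₀ r₀' hr₀ hr₀'
end

section
/- Let u₀ ∈ ℝⁿ, let D = conv{v₁, v₂} with v₁, v₂ linearly independent, and let x₀ ∈ D with u₀·x₀ = 0. Then for every ε > 0 there exists a nonempty open set U ⊆ ℝⁿ × ℝⁿ with U ⊆ B_ε(u₀, u₀) such that for every (u₁, u₂) ∈ U there exists x ∈ D ∩ B_ε(x₀) with u₁·x = 0 ≥ u₂·x. -/
/-!
Since `x₀ ≠ 0`, moving `u₀` slightly against `x₀` gives `u₂` with `⟪u₂, x₀⟫ < 0`; then pick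
`y ≠ x₀` in `D` so close to `x₀` that also `⟪u₂, y⟫ < 0`. Distinct points of `D` are linearly
independent, so `u₀` can also be moved slightly to some `u₁` with `⟪u₁, x₀⟫` and `⟪u₁, y⟫` of
opposite signs. Both sign conditions are open. For every pair `(u₁, u₂)` satisfying them, the
intermediate value theorem gives a zero of `⟪u₁, ·⟫` on `[x₀, y] ⊆ D ∩ B_ε(x₀)`, and
`⟪u₂, ·⟫ ≤ 0` there by linearity.
-/

open Set Metric Filter Topology RealInnerProductSpace

section LinearIndependence

variable {𝕜 V : Type*} [Field 𝕜] [LinearOrder 𝕜] [IsStrictOrderedRing 𝕜] [AddCommGroup V]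
  [Module 𝕜 V] {v₁ v₂ x y : V}

theorem LinearIndependent.ne_zero_of_mem_segment (h : LinearIndependent 𝕜 ![v₁, v₂])
    (hx : x ∈ segment 𝕜 v₁ v₂) : x ≠ 0 := by
  obtain ⟨a, b, -, -, hab, rfl⟩ := hx
  intro h0
  obtain ⟨rfl, rfl⟩ := LinearIndependent.pair_iff.1 h a b h0
  simp at hab

theorem LinearIndependent.pair_of_mem_segment (h : LinearIndependent 𝕜 ![v₁, v₂])
    (hx : x ∈ segment 𝕜 v₁ v₂) (hy : y ∈ segment 𝕜 v₁ v₂) (hxy : x ≠ y) :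
    LinearIndependent 𝕜 ![x, y] := by
  obtain ⟨a₁, b₁, -, -, h₁, rfl⟩ := hx
  obtain ⟨a₂, b₂, -, -, h₂, rfl⟩ := hy
  have ha : a₁ ≠ a₂ := by
    rintro rfl
    obtain rfl : b₁ = b₂ := by linear_combination h₁ - h₂
    exact hxy rfl
  refine LinearIndependent.pair_iff.2 fun s t hst => ?_
  obtain ⟨e₁, e₂⟩ := LinearIndependent.pair_iff.1 h (s * a₁ + t * a₂) (s * b₁ + t * b₂)
    (by rw [← hst]; module)
  have hsum : s + t = 0 := by linear_combination e₁ + e₂ - s * h₁ - t * h₂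
  have hs : s * (a₁ - a₂) = 0 := by linear_combination e₁ - a₂ * hsum
  obtain rfl : s = 0 := (mul_eq_zero.1 hs).resolve_right (sub_ne_zero.2 ha)
  exact ⟨rfl, by linarith⟩

end LinearIndependence

section Topology

variable {E : Type*} [AddCommGroup E] [Module ℝ E] [TopologicalSpace E] [ContinuousAdd E]
  [ContinuousSMul ℝ E]

theorem mem_closure_of_forall_add_smul_mem {S : Set E} {x w : E}
    (h : ∀ η : ℝ, 0 < η → x + η • w ∈ S) : x ∈ closure S := by
  have hlim : Tendsto (fun η : ℝ => x + η • w) (𝓝[>] 0) (𝓝 x) :=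
    tendsto_nhdsWithin_of_tendsto_nhds <|
      (by fun_prop : Continuous fun η : ℝ => x + η • w).tendsto' 0 x (by simp)
  exact mem_closure_of_tendsto hlim (eventually_nhdsWithin_of_forall h)

theorem mem_closure_segment_diff_singleton {v₁ v₂ x : E} (hne : v₁ ≠ v₂)
    (hx : x ∈ segment ℝ v₁ v₂) : x ∈ closure (segment ℝ v₁ v₂ \ {x}) := by
  obtain ⟨v, hv, hvx⟩ : ∃ v ∈ segment ℝ v₁ v₂, v ≠ x := by
    by_cases h : v₁ = x
    · exact ⟨v₂, right_mem_segment ℝ v₁ v₂, h ▸ hne.symm⟩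
    · exact ⟨v₁, left_mem_segment ℝ v₁ v₂, h⟩
  have hsub : openSegment ℝ x v ⊆ segment ℝ v₁ v₂ \ {x} := fun z hz =>
    ⟨(convex_segment v₁ v₂).openSegment_subset hx hv hz,
      by rintro rfl; exact hvx (left_mem_openSegment_iff.1 hz).symm⟩
  exact closure_mono hsub (segment_subset_closure_openSegment (left_mem_segment ℝ x v))

theorem exists_mem_segment_eq_zero_of_mul_nonpos {f : E → ℝ} (hf : Continuous f) {a b : E}
    (h : f a * f b ≤ 0) : ∃ x ∈ segment ℝ a b, f x = 0 := by
  rcases mul_nonpos_iff.1 h with ⟨ha, hb⟩ | ⟨ha, hb⟩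
  · rw [segment_symm]
    exact (convex_segment b a).isPreconnected.intermediate_value (left_mem_segment ℝ b a)
      (right_mem_segment ℝ b a) hf.continuousOn ⟨hb, ha⟩
  · exact (convex_segment a b).isPreconnected.intermediate_value (left_mem_segment ℝ a b)
      (right_mem_segment ℝ a b) hf.continuousOn ⟨ha, hb⟩

end Topology

section InnerProduct

variable {E : Type*} [NormedAddCommGroup E] [InnerProductSpace ℝ E]

theorem exists_inner_neg_inner_pos {a b : E} (h : LinearIndependent ℝ ![a, b]) :
    ∃ w : E, ⟪w, a⟫ < 0 ∧ 0 < ⟪w, b⟫ := by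
  have ha : 0 < ‖a‖ := norm_pos_iff.2 (h.ne_zero 0)
  have hb : 0 < ‖b‖ := norm_pos_iff.2 (h.ne_zero 1)
  -- strict Cauchy–Schwarz: equality would make `a` and `b` positively proportional
  have hcs : ⟪a, b⟫ < ‖a‖ * ‖b‖ := by
    refine (real_inner_le_norm a b).lt_of_ne fun heq => hb.ne' ?_
    refine (LinearIndependent.pair_iff.1 h ‖b‖ (-‖a‖) ?_).1
    rw [neg_smul, ← sub_eq_add_neg, sub_eq_zero]
    exact inner_eq_norm_mul_iff_real.1 heq
  refine ⟨‖a‖ • b - ‖b‖ • a, ?_, ?_⟩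
  · rw [inner_sub_left, real_inner_smul_left, real_inner_smul_left, real_inner_self_eq_norm_sq,
      real_inner_comm]
    nlinarith
  · rw [inner_sub_left, real_inner_smul_left, real_inner_smul_left, real_inner_self_eq_norm_sq]
    nlinarith

theorem mem_closure_inner_neg {u₀ a : E} (ha : a ≠ 0) (hu₀ : ⟪u₀, a⟫ ≤ 0) :
    u₀ ∈ closure {u | ⟪u, a⟫ < 0} := by
  refine mem_closure_of_forall_add_smul_mem (w := -a) fun η hη => ?_
  simp only [mem_ofPred_eq, inner_add_left, real_inner_smul_left, inner_neg_left,
    real_inner_self_eq_norm_sq]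
  nlinarith [mul_pos hη (pow_pos (norm_pos_iff.2 ha) 2)]

theorem mem_closure_inner_mul_inner_neg {u₀ a b : E} (h : LinearIndependent ℝ ![a, b])
    (hu₀ : ⟪u₀, a⟫ = 0) : u₀ ∈ closure {u | ⟪u, a⟫ * ⟪u, b⟫ < 0} := by
  obtain ⟨w, hwa, hwb⟩ := exists_inner_neg_inner_pos h
  rcases le_or_gt 0 ⟪u₀, b⟫ with hb | hb
  · refine mem_closure_of_forall_add_smul_mem (w := w) fun η hη => ?_
    simp only [mem_ofPred_eq, inner_add_left, real_inner_smul_left, hu₀, zero_add]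
    exact mul_neg_of_neg_of_pos (mul_neg_of_pos_of_neg hη hwa) (by positivity)
  · refine mem_closure_of_forall_add_smul_mem (w := -w) fun η hη => ?_
    simp only [mem_ofPred_eq, inner_add_left, real_inner_smul_left, inner_neg_left, hu₀, zero_add]
    exact mul_neg_of_pos_of_neg (by nlinarith) (by nlinarith)

theorem inner_nonpos_of_mem_segment {u a b x : E} (ha : ⟪u, a⟫ ≤ 0) (hb : ⟪u, b⟫ ≤ 0)
    (hx : x ∈ segment ℝ a b) : ⟪u, x⟫ ≤ 0 := by
  obtain ⟨s, t, hs, ht, -, rfl⟩ := hx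
  rw [inner_add_right, real_inner_smul_right, real_inner_smul_right]
  exact add_nonpos (mul_nonpos_of_nonneg_of_nonpos hs ha) (mul_nonpos_of_nonneg_of_nonpos ht hb)

end InnerProduct

theorem stmt_12 (n : ℕ) (u₀ v₁ v₂ x₀ : EuclideanSpace ℝ (Fin n))
    (hli : LinearIndependent ℝ ![v₁, v₂])
    (hx₀ : x₀ ∈ segment ℝ v₁ v₂) (hu₀ : inner ℝ u₀ x₀ = (0 : ℝ)) :
    ∀ ε > (0 : ℝ), ∃ U : Set (EuclideanSpace ℝ (Fin n) × EuclideanSpace ℝ (Fin n)),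
      U.Nonempty ∧ IsOpen U ∧ U ⊆ Metric.ball (u₀, u₀) ε ∧
      ∀ p ∈ U, ∃ x ∈ segment ℝ v₁ v₂ ∩ Metric.ball x₀ ε,
        inner ℝ p.1 x = (0 : ℝ) ∧ inner ℝ p.2 x ≤ (0 : ℝ) := by
  intro ε hε
  obtain ⟨u₂, hu₂, hu₂x₀⟩ := mem_closure_iff_nhds.1
    (mem_closure_inner_neg (hli.ne_zero_of_mem_segment hx₀) hu₀.le) _ (ball_mem_nhds u₀ hε)
  obtain ⟨y, ⟨hyε, hyu₂⟩, hyD, hyx₀⟩ := mem_closure_iff_nhds.1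
    (mem_closure_segment_diff_singleton (hli.injective.ne zero_ne_one) hx₀)
    (ball x₀ ε ∩ {x | ⟪u₂, x⟫ < 0})
    (inter_mem (ball_mem_nhds x₀ hε) ((isOpen_lt (by fun_prop) continuous_const).mem_nhds hu₂x₀))
  obtain ⟨u₁, hu₁, hu₁xy⟩ := mem_closure_iff_nhds.1
    (mem_closure_inner_mul_inner_neg (hli.pair_of_mem_segment hx₀ hyD (Ne.symm hyx₀)) hu₀)
    _ (ball_mem_nhds u₀ hε)
  refine ⟨(ball u₀ ε ∩ {u | ⟪u, x₀⟫ * ⟪u, y⟫ < 0}) ×ˢ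
      (ball u₀ ε ∩ {u | ⟪u, x₀⟫ < 0 ∧ ⟪u, y⟫ < 0}),
    ⟨(u₁, u₂), ⟨hu₁, hu₁xy⟩, hu₂, hu₂x₀, hyu₂⟩, ?_, ?_, ?_⟩
  · exact (isOpen_ball.inter (isOpen_lt (by fun_prop) continuous_const)).prod
      (isOpen_ball.inter ((isOpen_lt (by fun_prop) continuous_const).and
        (isOpen_lt (by fun_prop) continuous_const)))
  · rw [← ball_prod_same]
    exact prod_mono inter_subset_left inter_subset_left
  · rintro ⟨p₁, p₂⟩ ⟨⟨-, hp₁⟩, -, hp₂x₀, hp₂y⟩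
    obtain ⟨x, hx, hp₁x⟩ :=
      exists_mem_segment_eq_zero_of_mul_nonpos (by fun_prop : Continuous (⟪p₁, ·⟫)) hp₁.le
    exact ⟨x, ((convex_segment v₁ v₂).inter (convex_ball x₀ ε)).segment_subset
      ⟨hx₀, mem_ball_self hε⟩ ⟨hyD, hyε⟩ hx, hp₁x, inner_nonpos_of_mem_segment hp₂x₀.le hp₂y.le hx⟩
end

section
/- Let u₀ ∈ ℝⁿ, let D = conv{v₁, v₂, v₃} with v₁, v₂, v₃ linearly independent, and let x₀ ∈ D with u₀·x₀ = 0. Then for every ε > 0 there exists a nonempty open set U ⊆ ℝⁿ × ℝⁿ with U ⊆ B_ε(u₀, u₀) such that for every (u₁, u₂) ∈ U there exists x ∈ D ∩ B_ε(x₀) with u₁·x = 0 and u₂·x = 0. -/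
/-!
Write points of `D` in barycentric coordinates `c`. Then `x ∈ D` is annihilated by `u₁` and `u₂`
exactly when `c ≥ 0` solves the `3 × 3` linear system with rows `(1, 1, 1)`, `(⟪u₁, vⱼ⟫)ⱼ`,
`(⟪u₂, vⱼ⟫)ⱼ` and right-hand side `(1, 0, 0)`. Since the `vⱼ` are linearly independent, the
values `⟪u, vⱼ⟫` can be prescribed freely, so after moving `x₀` slightly into the interior of `D`
one finds a pair `(u₁, u₂)` near `(u₀, u₀)` whose system is nonsingular with a strictly positive
solution. By continuity of the matrix inverse, every pair close to it still has a positive solution,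
and the corresponding points of `D` stay close to `x₀`.
-/

open Set Filter Topology Matrix
open scoped RealInnerProductSpace

theorem convexHull_range_eq_image_stdSimplex {R E ι : Type*} [Field R] [LinearOrder R]
    [IsStrictOrderedRing R] [AddCommGroup E] [Module R E] [Fintype ι] (v : ι → E) :
    convexHull R (range v) = (fun w => ∑ i, w i • v i) '' stdSimplex R ι := by
  classical
  have h : (fun w : ι → R => ∑ i, w i • v i) = Fintype.linearCombination R v :=
    funext fun w => (Fintype.linearCombination_apply ..).symm
  rw [← convexHull_basis_eq_stdSimplex, h, LinearMap.image_convexHull, ← range_comp]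
  congr 2
  ext i
  simp [Fintype.linearCombination_apply]

theorem LinearIndependent.exists_inner_eq {ι E : Type*} [Fintype ι] [NormedAddCommGroup E]
    [InnerProductSpace ℝ E] {v : ι → E} (hv : LinearIndependent ℝ v) (r : ι → ℝ) :
    ∃ u : E, ∀ j, ⟪u, v j⟫ = r j := by
  let V := Submodule.span ℝ (range v)
  have : FiniteDimensional ℝ V := FiniteDimensional.span_of_finite ℝ (finite_range v)
  let f : StrongDual ℝ V := LinearMap.toContinuousLinearMap ((Module.Basis.span hv).constr ℝ r)
  refine ⟨(InnerProductSpace.toDual ℝ V).symm f, fun j => ?_⟩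
  rw [← Module.Basis.coe_span_apply hv j, ← Submodule.coe_inner,
    InnerProductSpace.toDual_symm_apply]
  exact (Module.Basis.span hv).constr_basis ℝ r j

theorem eventually_exists_mulVec_eq {X 𝕜 ι : Type*} [TopologicalSpace X] [NormedField 𝕜]
    [Fintype ι] [DecidableEq ι] {M : X → Matrix ι ι 𝕜} {p₀ : X} (hM : ContinuousAt M p₀)
    (hdet : (M p₀).det ≠ 0) {b c₀ : ι → 𝕜} (hc₀ : M p₀ *ᵥ c₀ = b) {N : Set (ι → 𝕜)}
    (hN : N ∈ 𝓝 c₀) :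
    ∀ᶠ p in 𝓝 p₀, ∃ c ∈ N, M p *ᵥ c = b := by
  have hinv : ContinuousAt (fun p => (M p)⁻¹) p₀ := by
    refine (continuousAt_matrix_inv _ ?_).comp hM
    rw [Ring.inverse_eq_inv']
    exact continuousAt_inv₀ hdet
  have hsol : ContinuousAt (fun p => (M p)⁻¹ *ᵥ b) p₀ :=
    (continuous_id.matrix_mulVec continuous_const).continuousAt.comp hinv
  have hsol₀ : (M p₀)⁻¹ *ᵥ b = c₀ := by
    rw [← hc₀, mulVec_mulVec, nonsing_inv_mul _ hdet.isUnit, one_mulVec]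
  have hdet' : ∀ᶠ p in 𝓝 p₀, (M p).det ≠ 0 :=
    (continuous_id.matrix_det.continuousAt.comp hM).eventually_ne hdet
  filter_upwards [hdet', hsol.eventually (hsol₀ ▸ hN)] with p hp hpN
  exact ⟨_, hpN, by rw [mulVec_mulVec, mul_nonsing_inv _ hp.isUnit, one_mulVec]⟩

/-- With `rᵢ = (⟪uᵢ, vⱼ⟫)ⱼ`, the solutions of `constraintMatrix r₁ r₂ *ᵥ c = ![1, 0, 0]` are the
barycentric coordinates of the points of the plane through the `vⱼ` annihilated by `u₁` and `u₂`. -/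
def constraintMatrix (r₁ r₂ : Fin 3 → ℝ) : Matrix (Fin 3) (Fin 3) ℝ := Matrix.of ![1, r₁, r₂]

theorem constraintMatrix_mulVec (r₁ r₂ c : Fin 3 → ℝ) :
    constraintMatrix r₁ r₂ *ᵥ c = ![∑ j, c j, r₁ ⬝ᵥ c, r₂ ⬝ᵥ c] := by
  ext i
  fin_cases i <;> simp [constraintMatrix, mulVec, dotProduct]

theorem continuous_constraintMatrix :
    Continuous fun r : (Fin 3 → ℝ) × (Fin 3 → ℝ) => constraintMatrix r.1 r.2 :=
  continuous_matrix fun i j => by fin_cases i <;> simp [constraintMatrix] <;> fun_prop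

theorem eventually_add_ne_zero_nhdsGT (a : ℝ) : ∀ᶠ t in 𝓝[>] 0, t + a ≠ 0 := by
  rcases le_or_gt 0 a with ha | ha
  · filter_upwards [self_mem_nhdsWithin] with t (ht : 0 < t)
    linarith
  · filter_upwards [Ioo_mem_nhdsGT (neg_pos.2 ha)] with t ht
    linarith [ht.2]

theorem exists_pos_constraintMatrix_mulVec_eq {c₀ ℓ : Fin 3 → ℝ} (hc₀ : ∀ j, 0 ≤ c₀ j)
    (hsum : ∑ j, c₀ j = 1) (hℓ : ℓ ⬝ᵥ c₀ = 0) {Nc Nr : Set (Fin 3 → ℝ)} (hNc : Nc ∈ 𝓝 c₀)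
    (hNr : Nr ∈ 𝓝 ℓ) :
    ∃ c ∈ Nc, (∀ j, 0 < c j) ∧ ∃ r₁ ∈ Nr, ∃ r₂ ∈ Nr,
      constraintMatrix r₁ r₂ *ᵥ c = ![1, 0, 0] ∧ (constraintMatrix r₁ r₂).det ≠ 0 := by
  set c : ℝ → Fin 3 → ℝ := fun t => (1 - t) • c₀ + t • fun _ => (3 : ℝ)⁻¹
  -- Subtracting a multiple of the row `1` makes `r i t` orthogonal to `c t` without changing the
  -- determinant of the system.
  set r : Fin 3 → ℝ → Fin 3 → ℝ := fun i t =>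
    ℓ + t • Pi.single i 1 - ((ℓ + t • Pi.single i 1) ⬝ᵥ c t) • 1
  have hc : Tendsto c (𝓝[>] 0) (𝓝 c₀) := by
    refine (Continuous.tendsto' ?_ 0 c₀ ?_).mono_left nhdsWithin_le_nhds
    · fun_prop
    · simp [c]
  have hr : ∀ i, Tendsto (r i) (𝓝[>] 0) (𝓝 ℓ) := by
    intro i
    refine (Continuous.tendsto' ?_ 0 ℓ ?_).mono_left nhdsWithin_le_nhds
    · fun_prop
    · simp [r, c, hℓ]
  have hsumc : ∀ t, ∑ j, c t j = 1 := by
    intro t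
    simp only [c, Fin.sum_univ_three, Pi.add_apply, Pi.smul_apply, smul_eq_mul] at hsum ⊢
    linear_combination (1 - t) * hsum
  have hrc : ∀ i t, r i t ⬝ᵥ c t = 0 := by
    intro i t
    simp [r, sub_dotProduct, one_dotProduct, hsumc]
  have hdet : ∀ t, (constraintMatrix (r 1 t) (r 2 t)).det = t * (t + (ℓ 1 + ℓ 2 - 2 * ℓ 0)) := by
    intro t
    simp only [det_fin_three, constraintMatrix, r, of_apply, cons_val, Pi.sub_apply, Pi.add_apply,
      Pi.smul_apply, Pi.one_apply, Pi.single_apply, Fin.reduceEq, reduceIte, smul_eq_mul]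
    ring
  have hI : ∀ᶠ t in 𝓝[>] (0 : ℝ), t ∈ Ioo 0 1 := Ioo_mem_nhdsGT one_pos
  obtain ⟨t, ⟨hct, hr₁, hr₂⟩, ⟨ht0, ht1⟩, hne⟩ :=
    (((hc.eventually hNc).and (((hr 1).eventually hNr).and ((hr 2).eventually hNr))).and
      (hI.and (eventually_add_ne_zero_nhdsGT (ℓ 1 + ℓ 2 - 2 * ℓ 0)))).exists
  refine ⟨c t, hct, fun j => ?_, r 1 t, hr₁, r 2 t, hr₂, ?_, ?_⟩
  · have := mul_nonneg (sub_nonneg.2 ht1.le) (hc₀ j)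
    simp only [c, Pi.add_apply, Pi.smul_apply, smul_eq_mul]
    positivity
  · simp [constraintMatrix_mulVec, hsumc, hrc]
  · rw [hdet]
    exact mul_ne_zero ht0.ne' hne

theorem exists_eventually_exists_inner_eq_zero {E : Type*} [NormedAddCommGroup E]
    [InnerProductSpace ℝ E] {v : Fin 3 → E} (hv : LinearIndependent ℝ v) {u₀ x₀ : E}
    (hx₀ : x₀ ∈ convexHull ℝ (range v)) (hu₀ : ⟪u₀, x₀⟫ = 0) {ε : ℝ} (hε : 0 < ε) :
    ∃ p₀ ∈ Metric.ball (u₀, u₀) ε, ∀ᶠ p : E × E in 𝓝 p₀,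
      ∃ x ∈ convexHull ℝ (range v) ∩ Metric.ball x₀ ε, ⟪p.1, x⟫ = 0 ∧ ⟪p.2, x⟫ = 0 := by
  rw [convexHull_range_eq_image_stdSimplex] at hx₀ ⊢
  obtain ⟨c₀, ⟨hc₀, hsum⟩, rfl⟩ := hx₀
  set comb : (Fin 3 → ℝ) → E := fun c => ∑ j, c j • v j
  set T : E → Fin 3 → ℝ := fun u j => ⟪u, v j⟫
  have hT : ∀ u c, ⟪u, comb c⟫ = T u ⬝ᵥ c := by
    simp [comb, T, inner_sum, inner_smul_right, dotProduct, mul_comm]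
  choose φ hφ using fun i => hv.exists_inner_eq (Pi.single i 1)
  set lift : (Fin 3 → ℝ) → E := fun r => u₀ + ∑ i, (r i - T u₀ i) • φ i
  have hTlift : ∀ r, T (lift r) = r := by
    intro r; ext j
    simp [lift, T, inner_add_left, sum_inner, inner_smul_left, hφ, Pi.single_apply]
  have hcomb : Continuous comb := by fun_prop
  have hlift : Continuous lift := by fun_prop
  have hTc : Continuous T := by fun_prop
  obtain ⟨c, hcN, hcpos, r₁, hr₁, r₂, hr₂, hsol, hdet⟩ :=
    exists_pos_constraintMatrix_mulVec_eq hc₀ hsum (by rw [← hT]; exact hu₀)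
      (hcomb.continuousAt.preimage_mem_nhds (Metric.ball_mem_nhds _ hε))
      (hlift.continuousAt.preimage_mem_nhds (by simpa [lift] using Metric.ball_mem_nhds u₀ hε))
  refine ⟨(lift r₁, lift r₂), by rw [← ball_prod_same]; exact ⟨hr₁, hr₂⟩, ?_⟩
  have hM : ContinuousAt (fun p : E × E => constraintMatrix (T p.1) (T p.2)) (lift r₁, lift r₂) :=
    (continuous_constraintMatrix.comp ((hTc.comp continuous_fst).prodMk
      (hTc.comp continuous_snd))).continuousAt
  have hN : {c | ∀ j, 0 < c j} ∩ comb ⁻¹' Metric.ball (comb c₀) ε ∈ 𝓝 c := by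
    refine IsOpen.mem_nhds (IsOpen.inter ?_ (Metric.isOpen_ball.preimage hcomb)) ⟨hcpos, hcN⟩
    simp only [ofPred_forall]
    exact isOpen_iInter_of_finite fun j => isOpen_lt continuous_const (continuous_apply j)
  filter_upwards [eventually_exists_mulVec_eq hM (by simpa [hTlift]) (by simpa [hTlift]) hN]
    with p ⟨c', ⟨hpos, hball⟩, hc'⟩
  simp only [constraintMatrix_mulVec, Matrix.vecCons_inj] at hc'
  obtain ⟨h1, h2, h3, -⟩ := hc'
  exact ⟨comb c', ⟨⟨c', ⟨fun j => (hpos j).le, h1⟩, rfl⟩, hball⟩, by rw [hT, h2], by rw [hT, h3]⟩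

theorem stmt_13 (n : ℕ) (u₀ v₁ v₂ v₃ x₀ : EuclideanSpace ℝ (Fin n))
    (hli : LinearIndependent ℝ ![v₁, v₂, v₃])
    (hx₀ : x₀ ∈ convexHull ℝ {v₁, v₂, v₃}) (hu₀ : inner ℝ u₀ x₀ = (0 : ℝ)) :
    ∀ ε > (0 : ℝ), ∃ U : Set (EuclideanSpace ℝ (Fin n) × EuclideanSpace ℝ (Fin n)),
      U.Nonempty ∧ IsOpen U ∧ U ⊆ Metric.ball (u₀, u₀) ε ∧
      ∀ p ∈ U, ∃ x ∈ convexHull ℝ {v₁, v₂, v₃} ∩ Metric.ball x₀ ε,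
        inner ℝ p.1 x = (0 : ℝ) ∧ inner ℝ p.2 x = (0 : ℝ) := by
  intro ε hε
  have hrange : ({v₁, v₂, v₃} : Set (EuclideanSpace ℝ (Fin n))) = range ![v₁, v₂, v₃] := by
    rw [Matrix.range_cons, range_cons_cons_empty, singleton_union]
  rw [hrange] at hx₀ ⊢
  obtain ⟨p₀, hp₀, hev⟩ := exists_eventually_exists_inner_eq_zero hli hx₀ hu₀ hε
  obtain ⟨U, hU, hUopen, hp₀U⟩ := eventually_nhds_iff.1 (hev.and (Metric.isOpen_ball.mem_nhds hp₀))
  exact ⟨U, ⟨p₀, hp₀U⟩, hUopen, fun p hp => (hU p hp).2, fun p hp => (hU p hp).1⟩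
end
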